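/- arXiv:1503.03465 — 3 statements merged into one kernel-verified Lean document; each statement's English description precedes it below -/
import Mathlib

section
/- Let F be a finite field and let m be even. The family of functions h(x_1, ..., x_m) = (a_1 + x_1)(a_2 + x_2) + (a_3 + x_3)(a_4 + x_4) + ... + (a_{m-1} + x_{m-1})(a_m + x_m), indexed by keys a_1, ..., a_m chosen independently and uniformly from F, is Δ-universal: for any c ∈ F and any two distinct inputs in F^m, the probability that the hash values differ by c is at most 1/|F|. -/
open Classical in
noncomputable def prob {K : Type*} [Fintype K] (P : K → Prop) : ℝ :=
  ((Finset.univ.filter P).card : ℝ) / (Fintype.card K)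

/-!
Let `x` and `x'` differ at some position, and let `p` be its partner in the pairing. With all
other keys fixed, the difference of the two hash values is an affine function of the key `a p`
whose slope is the (nonzero) difference of the inputs at that position. So on every line
parallel to the `p`-axis at most one key makes the difference equal to `c`.
-/

open Finset

section CoordinateCounting

variable {ι α : Type*} [Fintype ι] [DecidableEq ι] [Fintype α]

/-- The map `(a, v) ↦ update a p v` is injective on `{a | P a} × α`. -/
theorem card_filter_mul_card_le_of_coord_unique (P : (ι → α) → Prop) [DecidablePred P] (p : ι)
    (huniq : ∀ a b, P a → P b → (∀ i ≠ p, a i = b i) → a p = b p) :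
    #(univ.filter P) * Fintype.card α ≤ Fintype.card (ι → α) := by
  rw [← card_univ (α := α), ← card_product, ← card_univ (α := ι → α)]
  refine card_le_card_of_injOn (fun av => Function.update av.1 p av.2) (fun _ _ => mem_univ _) ?_
  rintro ⟨a, v⟩ hav ⟨b, w⟩ hbw hupd
  simp only [coe_product, Set.mem_prod, mem_coe, mem_filter, mem_univ, true_and] at hav hbw
  have hoff : ∀ i ≠ p, a i = b i := fun i hi => by
    simpa [Function.update_of_ne hi] using congrFun hupd i
  have hvw : v = w := by simpa using congrFun hupd p
  have hab : a = b := funext fun i => by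
    by_cases hi : i = p
    · exact hi ▸ huniq a b hav.1 hbw.1 hoff
    · exact hoff i hi
  rw [hab, hvw]

theorem prob_le_inv_card_of_coord_unique (P : (ι → α) → Prop) (p : ι)
    (huniq : ∀ a b, P a → P b → (∀ i ≠ p, a i = b i) → a p = b p) :
    prob P ≤ 1 / Fintype.card α := by
  classical
  have : Nonempty ι := ⟨p⟩
  rcases isEmpty_or_nonempty α with hα | hα
  · simp [prob]
  have hcard := card_filter_mul_card_le_of_coord_unique P p huniq
  unfold prob
  rw [div_le_div_iff₀ (by exact_mod_cast Fintype.card_pos) (by exact_mod_cast Fintype.card_pos),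
    one_mul]
  exact_mod_cast hcard

end CoordinateCounting

section PairProductSum

variable {κ ι F : Type*} [Fintype κ] [CommRing F]

def pairProductSum (e o : κ → ι) (x a : ι → F) : F :=
  ∑ k, (a (e k) + x (e k)) * (a (o k) + x (o k))

theorem pairProductSum_comm (e o : κ → ι) (x a : ι → F) :
    pairProductSum e o x a = pairProductSum o e x a := by
  simp only [pairProductSum, mul_comm]

theorem pairProductSum_sub_sub_of_eqOn_ne {e o : κ → ι} (ho : o.Injective) (heo : ∀ i j, e i ≠ o j)
    (x x' a b : ι → F) (k : κ) (hab : ∀ i ≠ o k, a i = b i) :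
    (pairProductSum e o x a - pairProductSum e o x' a) -
        (pairProductSum e o x b - pairProductSum e o x' b) =
      (x (e k) - x' (e k)) * (a (o k) - b (o k)) := by
  simp only [pairProductSum, ← sum_sub_distrib]
  rw [sum_eq_single_of_mem k (mem_univ k)]
  · rw [hab (e k) (heo k k)]
    ring
  · intro i _ hik
    rw [hab (e i) (heo i k), hab (o i) (ho.ne hik)]
    ring

end PairProductSum

section DeltaUniversal

variable {ι F : Type*} [Fintype ι] [DecidableEq ι] [CommRing F] [NoZeroDivisors F] [Fintype F]

theorem prob_eq_add_le_of_coord_slope (g g' : (ι → F) → F) (p : ι) {s : F} (hs : s ≠ 0)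
    (hslope : ∀ a b, (∀ i ≠ p, a i = b i) → (g a - g' a) - (g b - g' b) = s * (a p - b p))
    (c : F) : prob (fun a => g a = g' a + c) ≤ 1 / Fintype.card F := by
  refine prob_le_inv_card_of_coord_unique _ p fun a b ha hb hab => ?_
  have h : s * (a p - b p) = 0 := by rw [← hslope a b hab, ha, hb]; ring
  exact sub_eq_zero.mp ((mul_eq_zero.mp h).resolve_left hs)

theorem prob_pairProductSum_eq_add_le {κ : Type*} [Fintype κ] {e o : κ → ι}
    (he : e.Injective) (ho : o.Injective) (heo : ∀ i j, e i ≠ o j)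
    (hcover : ∀ j, j ∈ Set.range e ∨ j ∈ Set.range o) (c : F) {x x' : ι → F} (hxx' : x ≠ x') :
    prob (fun a => pairProductSum e o x a = pairProductSum e o x' a + c) ≤
      1 / Fintype.card F := by
  obtain ⟨j, hj⟩ := Function.ne_iff.mp hxx'
  rcases hcover j with ⟨k, rfl⟩ | ⟨k, rfl⟩
  · exact prob_eq_add_le_of_coord_slope _ _ (o k) (sub_ne_zero.mpr hj)
      (fun a b hab => pairProductSum_sub_sub_of_eqOn_ne ho heo x x' a b k hab) c
  · simp only [pairProductSum_comm e o]
    exact prob_eq_add_le_of_coord_slope _ _ (e k) (sub_ne_zero.mpr hj)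
      (fun a b hab => pairProductSum_sub_sub_of_eqOn_ne he (fun i j => (heo j i).symm)
        x x' a b k hab) c

end DeltaUniversal

section Interleaved

variable {n : ℕ}

def evenIndex (i : Fin n) : Fin (2 * n) := ⟨2 * i.1, by omega⟩

def oddIndex (i : Fin n) : Fin (2 * n) := ⟨2 * i.1 + 1, by omega⟩

theorem evenIndex_injective : (evenIndex : Fin n → Fin (2 * n)).Injective := fun i j h => by
  simp only [evenIndex, Fin.mk.injEq] at h
  omega

theorem oddIndex_injective : (oddIndex : Fin n → Fin (2 * n)).Injective := fun i j h => by
  simp only [oddIndex, Fin.mk.injEq] at h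
  omega

theorem evenIndex_ne_oddIndex (i j : Fin n) : evenIndex i ≠ oddIndex j := fun h => by
  simp only [evenIndex, oddIndex, Fin.mk.injEq] at h
  omega

theorem mem_range_evenIndex_or_oddIndex (j : Fin (2 * n)) :
    j ∈ Set.range evenIndex ∨ j ∈ Set.range oddIndex := by
  have hj := j.2
  rcases Nat.even_or_odd' j.1 with ⟨k, hk | hk⟩
  · exact .inl ⟨⟨k, by omega⟩, Fin.ext hk.symm⟩
  · exact .inr ⟨⟨k, by omega⟩, Fin.ext hk.symm⟩

end Interleaved

/-- The pseudo-dot-product family (a₁+x₁)(a₂+x₂)+⋯+(a_{m-1}+x_{m-1})(a_m+x_m)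
over a finite field, with uniform independent keys, is Δ-universal (m = 2n even). -/
theorem stmt6 {F : Type*} [Field F] [Fintype F] (n : ℕ) :
    ∀ c : F, ∀ x x' : Fin (2 * n) → F, x ≠ x' →
      prob (fun a : Fin (2 * n) → F =>
        (∑ i : Fin n, (a ⟨2 * i.1, by have := i.2; omega⟩ + x ⟨2 * i.1, by have := i.2; omega⟩) *
            (a ⟨2 * i.1 + 1, by have := i.2; omega⟩ + x ⟨2 * i.1 + 1, by have := i.2; omega⟩)) =
        (∑ i : Fin n, (a ⟨2 * i.1, by have := i.2; omega⟩ + x' ⟨2 * i.1, by have := i.2; omega⟩) *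
            (a ⟨2 * i.1 + 1, by have := i.2; omega⟩ + x' ⟨2 * i.1 + 1, by have := i.2; omega⟩)) + c)
        ≤ 1 / (Fintype.card F) := fun c _ _ hxx' =>
  prob_pairProductSum_eq_add_le evenIndex_injective oddIndex_injective evenIndex_ne_oddIndex
    mem_range_evenIndex_or_oddIndex c hxx'
end

section
/- Let F be a finite field and m ≥ 1. The polynomial hash family h_a(x_1, ..., x_m) = a^{m-1} x_1 + a^{m-2} x_2 + ... + x_m, with a chosen uniformly from F, is ((m−1)/|F|)-almost universal: for any two distinct inputs in F^m, the probability over a of a collision is at most (m−1)/|F|. -/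
open Polynomial in
/-- The polynomial hash family a ↦ a^{m-1}x₁ + ⋯ + x_m over a finite field is
((m-1)/|F|)-almost universal. -/
theorem stmt7 {F : Type*} [Field F] [Fintype F] (m : ℕ) (hm : 1 ≤ m) :
    ∀ x x' : Fin m → F, x ≠ x' →
      prob (fun a : F => ∑ i : Fin m, a ^ (m - 1 - i.1) * x i
          = ∑ i : Fin m, a ^ (m - 1 - i.1) * x' i) ≤ ((m : ℝ) - 1) / Fintype.card F := by
  classical
  intro x x' hxx
  set p : F[X] := ∑ i : Fin m, Polynomial.C (x i - x' i) * X ^ (m - 1 - i.1) with hp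
  have hcoeff : ∀ j : Fin m, p.coeff (m - 1 - j.1) = x j - x' j := by
    intro j
    rw [hp, Polynomial.finset_sum_coeff]
    rw [Finset.sum_eq_single j]
    · rw [Polynomial.coeff_C_mul, Polynomial.coeff_X_pow]; simp
    · intro i _ hij
      rw [Polynomial.coeff_C_mul, Polynomial.coeff_X_pow]
      have : m - 1 - i.1 ≠ m - 1 - j.1 := by
        intro h
        apply hij
        have hi : i.1 ≤ m - 1 := Nat.le_sub_one_of_lt i.2
        have hj : j.1 ≤ m - 1 := Nat.le_sub_one_of_lt j.2
        have : i.1 = j.1 := by omega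
        exact Fin.ext this
      rw [if_neg (fun h => this h.symm)]
      ring
    · simp
  have hpne : p ≠ 0 := by
    obtain ⟨j, hj⟩ := Function.ne_iff.mp hxx
    intro h
    have := hcoeff j
    rw [h] at this
    simp at this
    exact hj (sub_eq_zero.mp this.symm)
  have hdeg : p.natDegree ≤ m - 1 := by
    apply Polynomial.natDegree_sum_le_of_forall_le
    intro i _
    calc (Polynomial.C (x i - x' i) * X ^ (m - 1 - i.1)).natDegree
        ≤ m - 1 - i.1 := by
          apply le_trans (Polynomial.natDegree_C_mul_le _ _)
          simp
      _ ≤ m - 1 := Nat.sub_le _ _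
  have hsubset : (Finset.univ.filter (fun a : F => ∑ i : Fin m, a ^ (m - 1 - i.1) * x i
      = ∑ i : Fin m, a ^ (m - 1 - i.1) * x' i)) ⊆ p.roots.toFinset := by
    intro a ha
    simp only [Finset.mem_filter] at ha
    rw [Multiset.mem_toFinset, Polynomial.mem_roots hpne]
    · rw [hp, Polynomial.IsRoot]
      simp only [Polynomial.eval_finset_sum, Polynomial.eval_mul, Polynomial.eval_C,
        Polynomial.eval_pow, Polynomial.eval_X]
      have := sub_eq_zero.mpr ha.2
      rw [← this]
      rw [← Finset.sum_sub_distrib]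
      congr 1
      ext i
      ring
  have hcard : (Finset.univ.filter (fun a : F => ∑ i : Fin m, a ^ (m - 1 - i.1) * x i
      = ∑ i : Fin m, a ^ (m - 1 - i.1) * x' i)).card ≤ m - 1 := by
    calc _ ≤ p.roots.toFinset.card := Finset.card_le_card hsubset
      _ ≤ Multiset.card p.roots := Multiset.toFinset_card_le _
      _ ≤ p.natDegree := Polynomial.card_roots' p
      _ ≤ m - 1 := hdeg
  unfold prob
  have h0 : (0:ℝ) < Fintype.card F := by positivity
  have hcast : ((m:ℝ) - 1) = ((m - 1 : ℕ) : ℝ) := by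
    rw [Nat.cast_sub hm]; simp
  rw [hcast]
  gcongr
end

section
/- Let p = 2^{64} ⊕ r with r = 27. For any nonnegative integer x, x mod p = (((z div 2^{64}) ⋆ 2^{64}) mod p) ⊕ (z mod 2^{64}) ⊕ (x mod 2^{64}), where z = (x div 2^{64}) ⋆ r, and mod/div denote carry-less remainder and quotient. -/
/-!
Carry-less division with remainder is unique, because a nonzero carry-less multiple of `b` has
degree at least `deg b`. Since `2^k = p ⊕ r`, writing `x = q ⋆ 2^k ⊕ m` gives
`x = q ⋆ p ⊕ z ⊕ m` with `z = q ⋆ r`; splitting `z` at `2^k` and reducing its high part modulo `p`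
writes `x` as a multiple of `p` plus a sum of three remainders, each of degree `< k`.
-/

/-- Carry-less multiplication: `(a ⋆ b)ᵢ = ⨁ₖ a_{i-k} bₖ`. -/
def clmul : ℕ → ℕ → ℕ
  | 0, _ => 0
  | a + 1, b => (if (a + 1) % 2 = 1 then b else 0) ^^^ 2 * clmul ((a + 1) / 2) b
termination_by a _ => a
decreasing_by simp_wf; omega

lemma clmul_zero_left (b : ℕ) : clmul 0 b = 0 := by simp [clmul]

lemma clmul_eq_mod_two_mul_xor (a b : ℕ) : clmul a b = a % 2 * b ^^^ 2 * clmul (a / 2) b := by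
  match a with
  | 0 => simp [clmul]
  | a + 1 =>
    rw [clmul]
    rcases Nat.mod_two_eq_zero_or_one (a + 1) with h | h <;> simp [h]

lemma two_mul_xor (a b : ℕ) : 2 * (a ^^^ b) = 2 * a ^^^ 2 * b := by
  simpa only [Nat.shiftLeft_eq, pow_one, Nat.mul_comm] using
    Nat.shiftLeft_xor_distrib (i := 1) (a := a) (b := b)

lemma xor_mod_two_mul (a b c : ℕ) : (a ^^^ b) % 2 * c = a % 2 * c ^^^ b % 2 * c := by
  rw [Nat.xor_mod_two_eq]
  rcases Nat.mod_two_eq_zero_or_one a with ha | ha <;>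
    rcases Nat.mod_two_eq_zero_or_one b with hb | hb <;> simp [Nat.add_mod, ha, hb]

lemma mod_two_mul_xor (a b c : ℕ) : a % 2 * (b ^^^ c) = a % 2 * b ^^^ a % 2 * c := by
  rcases Nat.mod_two_eq_zero_or_one a with ha | ha <;> simp [ha]

lemma clmul_xor_left (a b c : ℕ) : clmul (a ^^^ b) c = clmul a c ^^^ clmul b c := by
  induction a using Nat.strong_induction_on generalizing b with
  | _ a ih =>
    rcases Nat.eq_zero_or_pos a with rfl | ha
    · simp [clmul_zero_left]
    · rw [clmul_eq_mod_two_mul_xor (a ^^^ b), Nat.xor_div_two, ih _ (Nat.div_lt_self ha one_lt_two),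
        clmul_eq_mod_two_mul_xor a, clmul_eq_mod_two_mul_xor b, two_mul_xor, xor_mod_two_mul]
      ac_rfl

lemma clmul_xor_right (a b c : ℕ) : clmul a (b ^^^ c) = clmul a b ^^^ clmul a c := by
  induction a using Nat.strong_induction_on with
  | _ a ih =>
    rcases Nat.eq_zero_or_pos a with rfl | ha
    · simp [clmul_zero_left]
    · rw [clmul_eq_mod_two_mul_xor a, clmul_eq_mod_two_mul_xor a b, clmul_eq_mod_two_mul_xor a c,
        ih _ (Nat.div_lt_self ha one_lt_two), two_mul_xor, mod_two_mul_xor]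
      ac_rfl

lemma two_pow_le_xor {k c y : ℕ} (hc : c < 2 ^ k) (hy : 2 ^ k ≤ y) : 2 ^ k ≤ c ^^^ y := by
  have hpos : ∀ n, 2 ^ k ≤ n ↔ 0 < n >>> k := fun n => by
    rw [Nat.shiftRight_eq_div_pow, Nat.div_pos_iff]; simp
  rw [hpos] at hy ⊢
  rwa [Nat.shiftRight_xor_distrib, Nat.shiftRight_eq_div_pow c, Nat.div_eq_of_lt hc,
    Nat.zero_xor]

lemma two_pow_log2_le_clmul {a b : ℕ} (ha : a ≠ 0) (hb : b ≠ 0) : 2 ^ b.log2 ≤ clmul a b := by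
  induction a using Nat.strong_induction_on with
  | _ a ih =>
    rw [clmul_eq_mod_two_mul_xor]
    rcases Nat.lt_or_ge a 2 with ha2 | ha2
    · obtain rfl : a = 1 := by omega
      simpa [clmul_zero_left] using Nat.log2_self_le hb
    · have hhigh : 2 ^ (b.log2 + 1) ≤ 2 * clmul (a / 2) b := by
        rw [pow_succ, mul_comm]
        exact Nat.mul_le_mul_left 2 (ih _ (Nat.div_lt_self (by omega) one_lt_two) (by omega))
      have hlow : a % 2 * b < 2 ^ (b.log2 + 1) :=
        lt_of_le_of_lt (by rcases Nat.mod_two_eq_zero_or_one a with h | h <;> simp [h])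
          Nat.lt_log2_self
      exact le_trans (Nat.pow_le_pow_right two_pos (Nat.le_succ _)) (two_pow_le_xor hlow hhigh)

lemma eq_of_clmul_xor_eq_clmul_xor {b q q' r r' : ℕ} (hb : b ≠ 0)
    (h : clmul q b ^^^ r = clmul q' b ^^^ r') (hr : r < 2 ^ b.log2) (hr' : r' < 2 ^ b.log2) :
    r = r' := by
  have hdiff : clmul (q ^^^ q') b = r ^^^ r' := by
    rw [clmul_xor_left, ← xor_cancel_right (clmul q b) r, h]
    ac_nf
    simp
  by_cases hq : q ^^^ q' = 0
  · rwa [hq, clmul_zero_left, eq_comm, xor_eq_zero_iff] at hdiff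
  · have := two_pow_log2_le_clmul hq hb
    have := Nat.xor_lt_two_pow hr hr'
    omega

theorem clmod_eq_of_eq_clmul_xor {cldiv clmod : ℕ → ℕ → ℕ}
    (hchar : ∀ a b : ℕ, b ≠ 0 →
      a = clmul (cldiv a b) b ^^^ clmod a b ∧ clmod a b < 2 ^ Nat.log2 b)
    {a b q r : ℕ} (hb : b ≠ 0) (h : a = clmul q b ^^^ r) (hr : r < 2 ^ b.log2) :
    clmod a b = r :=
  eq_of_clmul_xor_eq_clmul_xor hb ((hchar a b hb).1.symm.trans h) (hchar a b hb).2 hr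

lemma eq_clmul_xor_of_reduction {x q s m r z m' p q' m'' : ℕ} (hs : s = p ^^^ r)
    (hx : x = clmul q s ^^^ m) (hz : clmul q r = z ^^^ m') (hw : z = clmul q' p ^^^ m'') :
    x = clmul (q ^^^ q') p ^^^ (m'' ^^^ m' ^^^ m) := by
  rw [hx, hs, clmul_xor_right, hz, hw, clmul_xor_left]
  ac_rfl

theorem clmod_two_pow_xor {cldiv clmod : ℕ → ℕ → ℕ}
    (hchar : ∀ a b : ℕ, b ≠ 0 →
      a = clmul (cldiv a b) b ^^^ clmod a b ∧ clmod a b < 2 ^ Nat.log2 b)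
    {k r : ℕ} (hr : r < 2 ^ k) (x : ℕ) :
    clmod x (2 ^ k ^^^ r) =
      clmod (clmul (cldiv (clmul (cldiv x (2 ^ k)) r) (2 ^ k)) (2 ^ k)) (2 ^ k ^^^ r) ^^^
        clmod (clmul (cldiv x (2 ^ k)) r) (2 ^ k) ^^^ clmod x (2 ^ k) := by
  have hk : 2 ^ k ≤ 2 ^ k ^^^ r := by rw [Nat.xor_comm]; exact two_pow_le_xor hr le_rfl
  have hk0 : 2 ^ k ≠ 0 := (Nat.two_pow_pos k).ne'
  have hp0 : 2 ^ k ^^^ r ≠ 0 := by omega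
  have hlog : (2 ^ k ^^^ r).log2 = k :=
    (Nat.log2_eq_iff hp0).2 ⟨hk, Nat.xor_lt_two_pow (Nat.pow_lt_pow_succ one_lt_two)
      (hr.trans (Nat.pow_lt_pow_succ one_lt_two))⟩
  obtain ⟨hx, hxr⟩ := hchar x _ hk0
  obtain ⟨hz, hzr⟩ := hchar (clmul (cldiv x (2 ^ k)) r) _ hk0
  obtain ⟨hw, hwr⟩ := hchar (clmul (cldiv (clmul (cldiv x (2 ^ k)) r) (2 ^ k)) (2 ^ k)) _ hp0
  rw [Nat.log2_two_pow] at hxr hzr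
  rw [hlog] at hwr
  exact clmod_eq_of_eq_clmul_xor hchar hp0
    (eq_clmul_xor_of_reduction (xor_cancel_right _ _).symm hx hz hw)
    (by rw [hlog]; exact Nat.xor_lt_two_pow (Nat.xor_lt_two_pow hwr hzr) hxr)

/-- Reduction formula modulo p = 2^64 ⊕ 27: with z = (x div 2^64) ⋆ 27,
x mod p = ((z div 2^64) ⋆ 2^64) mod p ⊕ (z mod 2^64) ⊕ (x mod 2^64). -/
theorem stmt11 (cldiv clmod : ℕ → ℕ → ℕ)
    (hchar : ∀ a b : ℕ, b ≠ 0 →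
      a = clmul (cldiv a b) b ^^^ clmod a b ∧ clmod a b < 2 ^ Nat.log2 b)
    (x : ℕ) :
    clmod x (2 ^ 64 ^^^ 27) =
      clmod (clmul (cldiv (clmul (cldiv x (2 ^ 64)) 27) (2 ^ 64)) (2 ^ 64)) (2 ^ 64 ^^^ 27) ^^^
        clmod (clmul (cldiv x (2 ^ 64)) 27) (2 ^ 64) ^^^ clmod x (2 ^ 64) :=
  clmod_two_pow_xor hchar (by norm_num) x
end
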